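/- The group of ℤ-linear automorphisms of Λ₅ that preserve the bilinear form and fix K₅ acts transitively on the set of conics of Λ₅, and also acts transitively on the set of twisted cubics of Λ₅. -/

import Mathlib

/-- The intersection pairing on the Picard lattice `Λ_r = ℤ^(r+1)`:
`⟨x, y⟩ = x₀y₀ − x₁y₁ − ⋯ − x_r y_r`. -/
def pair {r : ℕ} (x y : Fin (r + 1) → ℤ) : ℤ :=
  x 0 * y 0 - ∑ i : Fin r, x i.succ * y i.succ

/-- The canonical class `K_r = (−3, 1, …, 1)`. -/
def Kc (r : ℕ) : Fin (r + 1) → ℤ := fun i => if i = 0 then -3 else 1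

/-- Exceptional classes (classes of `(−1)`-curves). -/
def Exceptional {r : ℕ} (E : Fin (r + 1) → ℤ) : Prop :=
  pair E E = -1 ∧ pair (Kc r) E = -1

/-- Nef classes: nonnegative pairing with every exceptional class. -/
def Nef {r : ℕ} (D : Fin (r + 1) → ℤ) : Prop :=
  ∀ E : Fin (r + 1) → ℤ, Exceptional E → 0 ≤ pair D E

/-- Conics: nef classes `Q` with `⟨Q,Q⟩ = 0` and `⟨K,Q⟩ = −2`. -/
def Conic {r : ℕ} (Q : Fin (r + 1) → ℤ) : Prop :=
  Nef Q ∧ pair Q Q = 0 ∧ pair (Kc r) Q = -2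

/-- Twisted cubics: nef classes `C` with `⟨C,C⟩ = 1` and `⟨K,C⟩ = −3`. -/
def TwistedCubic {r : ℕ} (C : Fin (r + 1) → ℤ) : Prop :=
  Nef C ∧ pair C C = 1 ∧ pair (Kc r) C = -3


/-!
Reflections `x ↦ x + ⟨x, α⟩ α` in roots `α` (`⟨α, α⟩ = -2`, `⟨K, α⟩ = 0`) are isometries fixing
`K`. Reflecting in one of the simple roots `h - e₁ - e₂ - e₃`, `eᵢ - eᵢ₊₁` whenever a class pairs
negatively with it moves the class towards the fundamental Weyl chamber. Nefness against the
exceptional classes `eᵢ` and `2h - e₁ - ⋯ - e₅` confines conics and twisted cubics to a finite box,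
and a finite computation shows that this reduction takes every conic to `h - e₁` and every twisted
cubic to `h`; so each family is a single orbit.
-/

open MulAction

section Lattice

variable {r : ℕ}

lemma pair_comm (x y : Fin (r + 1) → ℤ) : pair x y = pair y x := by
  simp only [pair, mul_comm]

def pairing (r : ℕ) : LinearMap.BilinForm ℤ (Fin (r + 1) → ℤ) :=
  LinearMap.mk₂ ℤ pair
    (fun x y z => by simp only [pair, Pi.add_apply, add_mul, Finset.sum_add_distrib]; ring)
    (fun c x y => by
      simp only [pair, Pi.smul_apply, smul_eq_mul, mul_assoc, ← Finset.mul_sum]; ring)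
    (fun x y z => by simp only [pair, Pi.add_apply, mul_add, Finset.sum_add_distrib]; ring)
    (fun c x y => by
      simp only [pair, Pi.smul_apply, smul_eq_mul, mul_left_comm _ c, ← Finset.mul_sum]; ring)

@[simp] lemma pairing_apply (x y : Fin (r + 1) → ℤ) : pairing r x y = pair x y := rfl

lemma pair_add_smul_left (x a y : Fin (r + 1) → ℤ) (c : ℤ) :
    pair (x + c • a) y = pair x y + c * pair a y := by
  simp only [← pairing_apply, map_add, map_smul, LinearMap.add_apply, LinearMap.smul_apply,
    smul_eq_mul]

lemma pair_add_smul_right (x y a : Fin (r + 1) → ℤ) (c : ℤ) :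
    pair x (y + c • a) = pair x y + c * pair x a := by
  rw [pair_comm, pair_add_smul_left, pair_comm y, pair_comm a]

def isometriesFixingK (r : ℕ) : Subgroup ((Fin (r + 1) → ℤ) ≃ₗ[ℤ] (Fin (r + 1) → ℤ)) where
  carrier := {g | (∀ x y, pair (g x) (g y) = pair x y) ∧ g (Kc r) = Kc r}
  mul_mem' := fun {g h} ⟨hg, hgK⟩ ⟨hh, hhK⟩ =>
    ⟨fun x y => (hg _ _).trans (hh x y), by simp [hhK, hgK]⟩
  one_mem' := ⟨fun _ _ => rfl, rfl⟩
  inv_mem' := fun {g} ⟨hg, hgK⟩ => by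
    refine ⟨fun x y => ?_, ?_⟩
    · simpa using (hg (g.symm x) (g.symm y)).symm
    · simpa using (congrArg g.symm hgK).symm

lemma exists_isometry_of_mem_orbit_of_mem_orbit {B D D' : Fin (r + 1) → ℤ}
    (hD : D ∈ orbit (isometriesFixingK r) B) (hD' : D' ∈ orbit (isometriesFixingK r) B) :
    ∃ g : (Fin (r + 1) → ℤ) ≃ₗ[ℤ] (Fin (r + 1) → ℤ),
      (∀ x y, pair (g x) (g y) = pair x y) ∧ g (Kc r) = Kc r ∧ g D = D' := by
  rw [← orbit_eq_iff.mpr hD] at hD'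
  obtain ⟨⟨g, hg, hgK⟩, rfl⟩ := hD'
  exact ⟨g, hg, hgK, rfl⟩

def IsRoot (α : Fin (r + 1) → ℤ) : Prop :=
  pair α α = -2 ∧ pair (Kc r) α = 0

lemma add_pair_smul_mem_orbit {α : Fin (r + 1) → ℤ} (hα : IsRoot α) (D : Fin (r + 1) → ℤ) :
    D + pair D α • α ∈ orbit (isometriesFixingK r) D := by
  have h2 : (-pairing r α) α = 2 := by simp [hα.1]
  have hs : ∀ x, Module.reflection h2 x = x + pair x α • α := fun x => by
    simp [Module.reflection_apply, pair_comm α, sub_eq_add_neg]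
  refine ⟨⟨Module.reflection h2, fun x y => ?_, ?_⟩, hs D⟩
  · simp only [hs, pair_add_smul_left, pair_add_smul_right, hα.1, pair_comm α y]
    ring
  · rw [hs, hα.2, zero_smul, add_zero]

-- Reflecting in `α` flips the sign of `⟨D, α⟩`; for the simple roots this is the usual reduction
-- of `D` into the fundamental Weyl chamber, run with `n` steps of fuel.
def descend (roots : List (Fin (r + 1) → ℤ)) : ℕ → (Fin (r + 1) → ℤ) → (Fin (r + 1) → ℤ)
  | 0, D => D
  | n + 1, D =>
    match roots.find? (fun α => pair D α < 0) with
    | some α => descend roots n (D + pair D α • α)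
    | none => D

lemma descend_mem_orbit {roots : List (Fin (r + 1) → ℤ)} (hroots : ∀ α ∈ roots, IsRoot α)
    (n : ℕ) (D : Fin (r + 1) → ℤ) : descend roots n D ∈ orbit (isometriesFixingK r) D := by
  induction n generalizing D with
  | zero => exact mem_orbit_self D
  | succ n ih =>
    rw [descend]
    split
    · next α hfind =>
      have hα := hroots α (List.mem_of_find?_eq_some hfind)
      rw [← orbit_eq_iff.mpr (add_pair_smul_mem_orbit hα D)]
      exact ih _
    · exact mem_orbit_self D

lemma exceptional_single (i : Fin r) : Exceptional (Pi.single i.succ 1 : Fin (r + 1) → ℤ) := by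
  constructor <;> simp [pair, Kc, Pi.single_apply, Finset.sum_ite_eq']

lemma Nef.apply_succ_nonpos {D : Fin (r + 1) → ℤ} (hD : Nef D) (i : Fin r) : D i.succ ≤ 0 := by
  simpa [pair, Pi.single_apply] using hD _ (exceptional_single i)

end Lattice

def simpleRoots : List (Fin 6 → ℤ) :=
  [![1, -1, -1, -1, 0, 0], ![0, 1, -1, 0, 0, 0], ![0, 0, 1, -1, 0, 0], ![0, 0, 0, 1, -1, 0],
    ![0, 0, 0, 0, 1, -1]]

lemma isRoot_of_mem_simpleRoots : ∀ α ∈ simpleRoots, IsRoot α := by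
  unfold IsRoot
  decide

-- `noncomputable` only because the order on `ℤ` is found through a noncomputable instance; the
-- kernel still evaluates membership, as `decide +kernel` below requires.
noncomputable def boundedClasses : Finset (Fin 6 → ℤ) :=
  Fintype.piFinset fun i => if i = 0 then Finset.Icc 1 3 else Finset.Icc (-2) 0

lemma mem_boundedClasses_of_nef {D : Fin 6 → ℤ} {d : ℤ} (hD : Nef D) (hd : 1 ≤ d) (hd3 : d ≤ 3)
    (hDD : pair D D = d - 2) (hKD : pair (Kc 5) D = -d) : D ∈ boundedClasses := by
  have hsum : ∑ i : Fin 5, D i.succ = d - 3 * D 0 := by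
    have : pair (Kc 5) D = -3 * D 0 - ∑ i : Fin 5, D i.succ := by simp [pair, Kc]
    linarith
  have hdeg : D 0 ≤ d := by
    have : pair D ![2, -1, -1, -1, -1, -1] = 2 * D 0 + ∑ i : Fin 5, D i.succ := by
      simp [pair, Fin.sum_univ_five]; ring
    linarith [hD ![2, -1, -1, -1, -1, -1] ⟨by decide, by decide⟩]
  have hneg := hD.apply_succ_nonpos
  have hD0 : 1 ≤ D 0 ∧ D 0 ≤ 3 := by
    have : ∑ i : Fin 5, D i.succ ≤ 0 := Finset.sum_nonpos fun i _ => hneg i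
    omega
  have hconsec : ∀ x : ℤ, 0 ≤ x * (x + 1) := fun x => by
    rcases le_or_gt 0 x with h | h <;> nlinarith
  have hsucc : ∀ j : Fin 5, D j.succ * (D j.succ + 1) ≤ 2 := fun j => by
    have hsum_consec : ∑ i : Fin 5, D i.succ * (D i.succ + 1) = (D 0 - 1) * (D 0 - 2) := by
      simp only [pair] at hDD
      simp only [mul_add, mul_one, Finset.sum_add_distrib]
      linarith
    have := Finset.single_le_sum (fun i _ => hconsec (D i.succ)) (Finset.mem_univ j)
    nlinarith
  rw [boundedClasses, Fintype.mem_piFinset]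
  intro i
  cases i using Fin.cases with
  | zero => simpa using hD0
  | succ j =>
    simp only [Fin.succ_ne_zero, if_false, Finset.mem_Icc]
    exact ⟨by nlinarith [hsucc j], hneg j⟩

lemma descend_conic_eq : ∀ D ∈ boundedClasses, pair D D = 0 → pair (Kc 5) D = -2 →
    descend simpleRoots 10 D = ![1, -1, 0, 0, 0, 0] := by
  decide +kernel

lemma descend_twistedCubic_eq : ∀ D ∈ boundedClasses, pair D D = 1 → pair (Kc 5) D = -3 →
    descend simpleRoots 10 D = ![1, 0, 0, 0, 0, 0] := by
  decide +kernel

lemma Conic.mem_orbit {Q : Fin 6 → ℤ} (hQ : Conic Q) :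
    Q ∈ orbit (isometriesFixingK 5) ![1, -1, 0, 0, 0, 0] := by
  obtain ⟨hnef, hQQ, hKQ⟩ := hQ
  have hbox := mem_boundedClasses_of_nef hnef (d := 2) (by norm_num) (by norm_num)
    (by rw [hQQ]; norm_num) hKQ
  rw [mem_orbit_symm, ← descend_conic_eq Q hbox hQQ hKQ]
  exact descend_mem_orbit isRoot_of_mem_simpleRoots 10 Q

lemma TwistedCubic.mem_orbit {C : Fin 6 → ℤ} (hC : TwistedCubic C) :
    C ∈ orbit (isometriesFixingK 5) ![1, 0, 0, 0, 0, 0] := by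
  obtain ⟨hnef, hCC, hKC⟩ := hC
  have hbox := mem_boundedClasses_of_nef hnef (d := 3) (by norm_num) (by norm_num)
    (by rw [hCC]; norm_num) hKC
  rw [mem_orbit_symm, ← descend_twistedCubic_eq C hbox hCC hKC]
  exact descend_mem_orbit isRoot_of_mem_simpleRoots 10 C

/-- The group of ℤ-linear automorphisms of `Λ₅` preserving the pairing and
fixing `K₅` acts transitively on the conics, and also on the twisted cubics. -/
theorem weyl_transitive_on_conics_and_cubics :
    (∀ Q Q' : Fin (5 + 1) → ℤ, Conic Q → Conic Q' →
        ∃ g : (Fin (5 + 1) → ℤ) ≃ₗ[ℤ] (Fin (5 + 1) → ℤ),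
          (∀ x y, pair (g x) (g y) = pair x y) ∧ g (Kc 5) = Kc 5 ∧ g Q = Q') ∧
    (∀ C C' : Fin (5 + 1) → ℤ, TwistedCubic C → TwistedCubic C' →
        ∃ g : (Fin (5 + 1) → ℤ) ≃ₗ[ℤ] (Fin (5 + 1) → ℤ),
          (∀ x y, pair (g x) (g y) = pair x y) ∧ g (Kc 5) = Kc 5 ∧ g C = C') :=
  ⟨fun _ _ hQ hQ' => exists_isometry_of_mem_orbit_of_mem_orbit hQ.mem_orbit hQ'.mem_orbit,
    fun _ _ hC hC' => exists_isometry_of_mem_orbit_of_mem_orbit hC.mem_orbit hC'.mem_orbit⟩
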